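/- arXiv:1503.07444 — 10 statements merged into one kernel-verified Lean document; each statement's English description precedes it below -/
import Mathlib

section
/- Let n, d, k be natural numbers with n even, n ≥ 10, 2 ≤ d, d + 1 ≤ n/2, n + 1 ≤ k, and k − n ≤ C(n/2, d+1), where C denotes the binomial coefficient. Then there exist at least C(C(n/2, d+1), k − n) pairwise distinct abstract simplicial complexes on the vertex set Fin n, each of dimension exactly d and each having exactly k maximal simplices. -/
/-- An abstract simplicial complex on vertex type `V`, given as a finite
collection of nonempty finite subsets of `V` closed under taking nonempty subsets. -/
def IsSimplicialComplex {V : Type*} [DecidableEq V] (K : Finset (Finset V)) : Prop :=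
  (∀ σ ∈ K, σ ≠ ∅) ∧ ∀ σ ∈ K, ∀ τ, τ ⊆ σ → τ ≠ ∅ → τ ∈ K

/-- `K` has dimension exactly `d`: some simplex has `d + 1` vertices and all
simplices have at most `d + 1` vertices. -/
def HasDimension {V : Type*} [DecidableEq V] (K : Finset (Finset V)) (d : ℕ) : Prop :=
  (∃ σ ∈ K, σ.card = d + 1) ∧ ∀ σ ∈ K, σ.card ≤ d + 1

/-- The maximal simplices of `K`: those not properly contained in any other simplex of `K`. -/
def maximalSimplices {V : Type*} [DecidableEq V] (K : Finset (Finset V)) : Finset (Finset V) :=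
  K.filter (fun σ => ∀ τ ∈ K, σ ⊆ τ → σ = τ)

/-- The set of `x : Fin n` with `a ≤ x < b`. -/
def blk (n a b : ℕ) : Finset (Fin n) :=
  (Finset.Ico a (min b n)).attachFin
    (fun m hm => lt_of_lt_of_le (Finset.mem_Ico.1 hm).2 (min_le_right _ _))

lemma mem_blk {n a b : ℕ} {x : Fin n} : x ∈ blk n a b ↔ a ≤ (x : ℕ) ∧ (x : ℕ) < b := by
  simp only [blk, Finset.mem_attachFin, Finset.mem_Ico, lt_min_iff]
  exact ⟨fun h => ⟨h.1, h.2.1⟩, fun h => ⟨h.1, h.2, x.isLt⟩⟩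

lemma card_blk {n a b : ℕ} (h : b ≤ n) : (blk n a b).card = b - a := by
  rw [blk, Finset.card_attachFin, Nat.card_Ico, min_eq_left h]

/-- The `i`-th auxiliary maximal simplex. -/
def Gmap (n d : ℕ) (i : Fin n) : Finset (Fin n) :=
  if (i : ℕ) < n / 2 then insert i (blk n (n / 2) (n / 2 + d))
  else insert i (blk n 0 d)

/-- The nonempty-downward-closure of a family of finsets. -/
def clo {V : Type*} [DecidableEq V] (M : Finset (Finset V)) : Finset (Finset V) :=
  M.biUnion (fun σ => σ.powerset.erase ∅)

lemma mem_clo {V : Type*} [DecidableEq V] {M : Finset (Finset V)} {τ : Finset V} :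
    τ ∈ clo M ↔ τ ≠ ∅ ∧ ∃ σ ∈ M, τ ⊆ σ := by
  simp only [clo, Finset.mem_biUnion, Finset.mem_erase, Finset.mem_powerset]
  tauto

lemma maximalSimplices_clo {V : Type*} [DecidableEq V] {M : Finset (Finset V)} {c : ℕ}
    (hc : 0 < c) (hM : ∀ σ ∈ M, σ.card = c) : maximalSimplices (clo M) = M := by
  ext σ
  simp only [maximalSimplices, Finset.mem_filter]
  constructor
  · rintro ⟨hσ, hmax⟩
    obtain ⟨-, ρ, hρ, hσρ⟩ := mem_clo.1 hσ
    have hρK : ρ ∈ clo M := mem_clo.2 ⟨by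
      intro h; rw [h] at hρ; have := hM _ hρ; simp at this; omega, ρ, hρ, subset_rfl⟩
    rwa [hmax ρ hρK hσρ]
  · intro hσ
    have hσK : σ ∈ clo M := mem_clo.2 ⟨by
      intro h; rw [h] at hσ; have := hM _ hσ; simp at this; omega, σ, hσ, subset_rfl⟩
    refine ⟨hσK, fun τ hτ hστ => ?_⟩
    obtain ⟨-, ρ, hρ, hτρ⟩ := mem_clo.1 hτ
    have hσρ : σ = ρ := Finset.eq_of_subset_of_card_le (hστ.trans hτρ)
      (by rw [hM _ hρ, hM _ hσ])
    exact Finset.Subset.antisymm hστ (by rw [hσρ]; exact hτρ)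

theorem stmt0 (n d k : ℕ) (hn : Even n) (hn10 : 10 ≤ n) (hd : 2 ≤ d)
    (hdn : d + 1 ≤ n / 2) (hk : n + 1 ≤ k)
    (hkc : k - n ≤ Nat.choose (n / 2) (d + 1)) :
    ∃ S : Finset (Finset (Finset (Fin n))),
      Nat.choose (Nat.choose (n / 2) (d + 1)) (k - n) ≤ S.card ∧
      ∀ K ∈ S, IsSimplicialComplex K ∧ HasDimension K d ∧
        (maximalSimplices K).card = k := by
  have hn2 : n / 2 ≤ n := Nat.div_le_self n 2
  have hhalf : n / 2 + n / 2 = n := by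
    obtain ⟨m, hm⟩ := hn; omega
  have hnd : n / 2 + d ≤ n := by omega
  have hdn2 : d < n / 2 := by omega
  -- the half vertex set
  set A : Finset (Fin n) := blk n 0 (n / 2) with hA
  have hAcard : A.card = n / 2 := by rw [hA, card_blk hn2]; omega
  -- cardinality of each Gmap
  have hGcard : ∀ i : Fin n, (Gmap n d i).card = d + 1 := by
    intro i
    rw [Gmap]
    split_ifs with h
    · rw [Finset.card_insert_of_notMem (by rw [mem_blk]; omega), card_blk hnd]; omega
    · rw [Finset.card_insert_of_notMem (by rw [mem_blk]; omega), card_blk (by omega)]; omega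
  -- each Gmap contains a vertex in the upper half
  have hGbig : ∀ i : Fin n, ∃ x ∈ Gmap n d i, n / 2 ≤ (x : ℕ) := by
    intro i
    rw [Gmap]
    split_ifs with h
    · refine ⟨⟨n / 2, by omega⟩, Finset.mem_insert_of_mem ?_, by simp⟩
      rw [mem_blk]; simp; omega
    · exact ⟨i, Finset.mem_insert_self _ _, by omega⟩
  -- elements of P (subsets of A) never coincide with Gmaps
  have hPA : ∀ σ : Finset (Fin n), σ ⊆ A → ∀ i : Fin n, σ ≠ Gmap n d i := by
    intro σ hσ i hEq
    obtain ⟨x, hx, hx2⟩ := hGbig i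
    rw [← hEq] at hx
    have := hσ hx
    rw [hA, mem_blk] at this
    omega
  -- injectivity of Gmap
  have hGinj : Function.Injective (Gmap n d) := by
    intro i j hij
    have key : ∀ l : Fin n, ((Gmap n d l).filter (fun x : Fin n => (x : ℕ) < n / 2)).card
        = if (l : ℕ) < n / 2 then 1 else d := by
      intro l
      rw [Gmap]
      split_ifs with h
      · have : (insert l (blk n (n / 2) (n / 2 + d))).filter (fun x : Fin n => (x : ℕ) < n / 2)
            = {l} := by
          ext x
          simp only [Finset.mem_filter, Finset.mem_insert, mem_blk, Finset.mem_singleton]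
          constructor
          · rintro ⟨h1 | h1, h2⟩
            · exact h1
            · omega
          · rintro rfl; exact ⟨Or.inl rfl, h⟩
        rw [this, Finset.card_singleton]
      · have : (insert l (blk n 0 d)).filter (fun x : Fin n => (x : ℕ) < n / 2)
            = blk n 0 d := by
          ext x
          simp only [Finset.mem_filter, Finset.mem_insert, mem_blk]
          constructor
          · rintro ⟨h1 | h1, h2⟩
            · omega
            · exact h1
          · rintro h1; exact ⟨Or.inr h1, by omega⟩
        rw [this, card_blk (by omega)]; omega
    have hsame : (if (i : ℕ) < n / 2 then 1 else d) = (if (j : ℕ) < n / 2 then 1 else d) := by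
      rw [← key i, ← key j, hij]
    by_cases hi : (i : ℕ) < n / 2 <;> by_cases hj : (j : ℕ) < n / 2
    · -- both lower half
      rw [Gmap, if_pos hi, Gmap, if_pos hj] at hij
      have : i ∈ insert j (blk n (n / 2) (n / 2 + d)) := by
        rw [← hij]; exact Finset.mem_insert_self _ _
      rcases Finset.mem_insert.1 this with h | h
      · exact h
      · rw [mem_blk] at h; omega
    · simp [hi, hj] at hsame; omega
    · simp [hi, hj] at hsame; omega
    · rw [Gmap, if_neg hi, Gmap, if_neg hj] at hij
      have : i ∈ insert j (blk n 0 d) := by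
        rw [← hij]; exact Finset.mem_insert_self _ _
      rcases Finset.mem_insert.1 this with h | h
      · exact h
      · rw [mem_blk] at h; omega
  set Gset : Finset (Finset (Fin n)) := Finset.image (Gmap n d) Finset.univ with hGset
  have hGsetCard : Gset.card = n := by
    rw [hGset, Finset.card_image_of_injective _ hGinj, Finset.card_univ, Fintype.card_fin]
  set P : Finset (Finset (Fin n)) := Finset.powersetCard (d + 1) A with hP
  have hPcard : P.card = Nat.choose (n / 2) (d + 1) := by
    rw [hP, Finset.card_powersetCard, hAcard]
  -- members of F ∪ Gset all have card d+1
  have hMall : ∀ F, F ∈ P.powersetCard (k - n) → ∀ σ ∈ F ∪ Gset, σ.card = d + 1 := by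
    intro F hF σ hσ
    rcases Finset.mem_union.1 hσ with h | h
    · have hFP := Finset.mem_powersetCard.1 hF
      have := hFP.1 h
      rw [hP, Finset.mem_powersetCard] at this
      exact this.2
    · obtain ⟨i, -, rfl⟩ := Finset.mem_image.1 h
      exact hGcard i
  -- disjointness of F and Gset
  have hdisj : ∀ F, F ∈ P.powersetCard (k - n) → Disjoint F Gset := by
    intro F hF
    rw [Finset.disjoint_left]
    intro σ hσF hσG
    obtain ⟨i, -, rfl⟩ := Finset.mem_image.1 hσG
    have hFP := (Finset.mem_powersetCard.1 hF).1 hσF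
    rw [hP, Finset.mem_powersetCard] at hFP
    exact hPA _ hFP.1 i rfl
  refine ⟨(P.powersetCard (k - n)).image (fun F => clo (F ∪ Gset)), ?_, ?_⟩
  · rw [Finset.card_image_of_injOn, Finset.card_powersetCard, hPcard]
    intro F hF F' hF' hEq
    rw [Finset.mem_coe] at hF hF'
    have hEq' : clo (F ∪ Gset) = clo (F' ∪ Gset) := hEq
    have h1 := maximalSimplices_clo (c := d + 1) (by omega) (hMall F hF)
    have h2 := maximalSimplices_clo (c := d + 1) (by omega) (hMall F' hF')
    have hU : F ∪ Gset = F' ∪ Gset := by rw [← h1, ← h2, hEq']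
    ext σ
    constructor
    · intro hσ
      have : σ ∈ F' ∪ Gset := by rw [← hU]; exact Finset.mem_union_left _ hσ
      rcases Finset.mem_union.1 this with h | h
      · exact h
      · exact absurd h (Finset.disjoint_left.1 (hdisj F hF) hσ)
    · intro hσ
      have : σ ∈ F ∪ Gset := by rw [hU]; exact Finset.mem_union_left _ hσ
      rcases Finset.mem_union.1 this with h | h
      · exact h
      · exact absurd h (Finset.disjoint_left.1 (hdisj F' hF') hσ)
  · intro K hK
    obtain ⟨F, hF, rfl⟩ := Finset.mem_image.1 hK
    have hall := hMall F hF
    have hmax := maximalSimplices_clo (c := d + 1) (by omega) hall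
    have hGne : (Gmap n d ⟨0, by omega⟩) ∈ F ∪ Gset :=
      Finset.mem_union_right _ (Finset.mem_image_of_mem _ (Finset.mem_univ _))
    refine ⟨⟨?_, ?_⟩, ⟨?_, ?_⟩, ?_⟩
    · intro σ hσ; exact (mem_clo.1 hσ).1
    · intro σ hσ τ hτσ hτne
      obtain ⟨-, ρ, hρ, hσρ⟩ := mem_clo.1 hσ
      exact mem_clo.2 ⟨hτne, ρ, hρ, hτσ.trans hσρ⟩
    · refine ⟨Gmap n d ⟨0, by omega⟩, mem_clo.2 ⟨?_, _, hGne, subset_rfl⟩, hall _ hGne⟩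
      intro h
      have := hGcard ⟨0, by omega⟩
      rw [h] at this; simp at this
    · intro σ hσ
      obtain ⟨-, ρ, hρ, hσρ⟩ := mem_clo.1 hσ
      calc σ.card ≤ ρ.card := Finset.card_le_card hσρ
        _ = d + 1 := hall _ hρ
    · rw [hmax, Finset.card_union_of_disjoint (hdisj F hF), hGsetCard,
        (Finset.mem_powersetCard.1 hF).2]
      omega
end

section
/- Let n, d, k be natural numbers with n even, n ≥ 10, 2 ≤ d, d + 1 ≤ n/2, n + 1 ≤ k, and k − n ≤ C(n/2, d+1). Let 𝒞 be the set of all abstract simplicial complexes on the vertex set Fin n of dimension exactly d with exactly k maximal simplices. If s is a natural number with 2^s < C(C(n/2, d+1), k − n), then there is no injective map from 𝒞 into the set of binary strings of length s (i.e., into Fin s → Bool). In other words, any data structure representing this class requires at least log₂ C(C(n/2, d+1), k − n) bits. -/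
theorem stmt1 (n d k s : ℕ) (hn : Even n) (hn10 : 10 ≤ n) (hd : 2 ≤ d)
    (hdn : d + 1 ≤ n / 2) (hk : n + 1 ≤ k)
    (hkc : k - n ≤ Nat.choose (n / 2) (d + 1))
    (hs : 2 ^ s < Nat.choose (Nat.choose (n / 2) (d + 1)) (k - n)) :
    ¬ ∃ f : {K : Finset (Finset (Fin n)) //
        IsSimplicialComplex K ∧ HasDimension K d ∧ (maximalSimplices K).card = k} →
        (Fin s → Bool),
      Function.Injective f := by
  classical
  rintro ⟨f, hf⟩
  set m := n / 2 with hm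
  have hn2 : m + m = n := by
    have := Nat.div_two_mul_two_of_even hn
    omega
  have hm5 : 5 ≤ m := by omega
  -- Choose a set A of m vertices, let B be its complement (also of size m).
  obtain ⟨A, -, hA⟩ := Finset.exists_subset_card_eq
    (show m ≤ (Finset.univ : Finset (Fin n)).card by
      rw [Finset.card_univ, Fintype.card_fin]; omega)
  set B := Aᶜ with hB
  have hBcard : B.card = m := by
    rw [hB, Finset.card_compl, hA, Fintype.card_fin]; omega
  -- Choose a set P of n pairs inside B.
  have hpairs : n ≤ (B.powersetCard 2).card := by
    rw [Finset.card_powersetCard, hBcard, Nat.choose_two_right]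
    have h4 : 4 ≤ m - 1 := by omega
    have hle : (m + m) * 2 ≤ m * (m - 1) := by
      calc (m + m) * 2 = m * 4 := by ring
        _ ≤ m * (m - 1) := Nat.mul_le_mul_left m h4
    have := (Nat.le_div_iff_mul_le (by norm_num : 0 < 2)).2 hle
    omega
  obtain ⟨P, hPsub, hPcard⟩ := Finset.exists_subset_card_eq hpairs
  have hPmem : ∀ p ∈ P, p ⊆ B ∧ p.card = 2 := fun p hp => by
    have := hPsub hp
    rwa [Finset.mem_powersetCard] at this
  -- The map from families to complexes.
  set Φ : Finset (Finset (Fin n)) → Finset (Finset (Fin n)) :=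
    fun F => Finset.univ.filter (fun τ => τ ≠ ∅ ∧ ∃ ρ ∈ F ∪ P, τ ⊆ ρ) with hΦ
  have hΦmem : ∀ F τ, τ ∈ Φ F ↔ τ ≠ ∅ ∧ ∃ ρ ∈ F ∪ P, τ ⊆ ρ := by
    intro F τ; simp [hΦ]
  set S : Finset (Finset (Finset (Fin n))) := (A.powersetCard (d + 1)).powersetCard (k - n)
    with hS
  have hSmem : ∀ F ∈ S, (∀ σ ∈ F, σ ⊆ A ∧ σ.card = d + 1) ∧ F.card = k - n := by
    intro F hF
    rw [hS, Finset.mem_powersetCard] at hF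
    refine ⟨fun σ hσ => ?_, hF.2⟩
    have := hF.1 hσ
    rwa [Finset.mem_powersetCard] at this
  -- Key properties of Φ F for F ∈ S.
  have key : ∀ F ∈ S, IsSimplicialComplex (Φ F) ∧ HasDimension (Φ F) d ∧
      maximalSimplices (Φ F) = F ∪ P ∧
      F = (Φ F).filter (fun τ => τ.card = d + 1) := by
    intro F hF
    obtain ⟨hFA, hFcard⟩ := hSmem F hF
    have hFP : ∀ ρ ∈ F ∪ P, ρ ∈ Φ F := by
      intro ρ hρ
      rw [hΦmem]
      refine ⟨?_, ρ, hρ, Finset.Subset.refl ρ⟩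
      rcases Finset.mem_union.1 hρ with h | h
      · have := (hFA ρ h).2
        intro he; rw [he] at this; simp at this
      · have := (hPmem ρ h).2
        intro he; rw [he] at this; simp at this
    have hcard_le : ∀ τ ∈ Φ F, τ.card ≤ d + 1 := by
      intro τ hτ
      rw [hΦmem] at hτ
      obtain ⟨-, ρ, hρ, hsub⟩ := hτ
      have := Finset.card_le_card hsub
      rcases Finset.mem_union.1 hρ with h | h
      · rw [(hFA ρ h).2] at this; exact this
      · rw [(hPmem ρ h).2] at this; omega
    have hFne : F.Nonempty := by
      rw [← Finset.card_pos, hFcard]; omega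
    -- the two maximality facts
    have hmaxF : ∀ σ ∈ F, ∀ τ ∈ Φ F, σ ⊆ τ → σ = τ := by
      intro σ hσ τ hτ hsub
      exact Finset.eq_of_subset_of_card_le hsub
        (by rw [(hFA σ hσ).2]; exact hcard_le τ hτ)
    have hmaxP : ∀ p ∈ P, ∀ τ ∈ Φ F, p ⊆ τ → p = τ := by
      intro p hp τ hτ hsub
      rw [hΦmem] at hτ
      obtain ⟨-, ρ, hρ, hτρ⟩ := hτ
      rcases Finset.mem_union.1 hρ with h | h
      · exfalso
        have hpne : p.Nonempty := by
          rw [← Finset.card_pos, (hPmem p hp).2]; omega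
        obtain ⟨x, hx⟩ := hpne
        have hxA : x ∈ A := (hFA ρ h).1 (hτρ (hsub hx))
        have hxB : x ∈ B := (hPmem p hp).1 hx
        rw [hB, Finset.mem_compl] at hxB
        exact hxB hxA
      · have hpρ : p = ρ := Finset.eq_of_subset_of_card_le (hsub.trans hτρ)
          (by rw [(hPmem p hp).2, (hPmem ρ h).2])
        exact Finset.Subset.antisymm hsub (by rw [hpρ]; exact hτρ)
    refine ⟨⟨fun σ hσ => ((hΦmem F σ).1 hσ).1, fun σ hσ τ hτσ hτne => ?_⟩,
      ⟨?_, hcard_le⟩, ?_, ?_⟩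
    · rw [hΦmem] at hσ ⊢
      obtain ⟨-, ρ, hρ, hσρ⟩ := hσ
      exact ⟨hτne, ρ, hρ, hτσ.trans hσρ⟩
    · obtain ⟨σ, hσ⟩ := hFne
      exact ⟨σ, hFP σ (Finset.mem_union_left _ hσ), (hFA σ hσ).2⟩
    · ext τ
      simp only [maximalSimplices, Finset.mem_filter]
      constructor
      · rintro ⟨hτ, hmax⟩
        rw [hΦmem] at hτ
        obtain ⟨-, ρ, hρ, hτρ⟩ := hτ
        rwa [hmax ρ (hFP ρ hρ) hτρ]
      · intro hτ
        refine ⟨hFP τ hτ, ?_⟩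
        rcases Finset.mem_union.1 hτ with h | h
        · exact hmaxF τ h
        · exact hmaxP τ h
    · ext τ
      rw [Finset.mem_filter]
      constructor
      · intro hτ
        exact ⟨hFP τ (Finset.mem_union_left _ hτ), (hFA τ hτ).2⟩
      · rintro ⟨hτ, hcard⟩
        rw [hΦmem] at hτ
        obtain ⟨-, ρ, hρ, hτρ⟩ := hτ
        rcases Finset.mem_union.1 hρ with h | h
        · have : τ = ρ := Finset.eq_of_subset_of_card_le hτρ
            (by rw [(hFA ρ h).2, hcard])
          rwa [this]
        · exfalso
          have := Finset.card_le_card hτρ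
          rw [hcard, (hPmem ρ h).2] at this
          omega
  -- number of maximal simplices is k
  have keyk : ∀ F ∈ S, (maximalSimplices (Φ F)).card = k := by
    intro F hF
    obtain ⟨hFA, hFcard⟩ := hSmem F hF
    obtain ⟨-, -, hmax, -⟩ := key F hF
    rw [hmax, Finset.card_union_of_disjoint, hFcard, hPcard]
    · omega
    · rw [Finset.disjoint_left]
      intro σ hσF hσP
      have h1 := (hFA σ hσF).2
      have h2 := (hPmem σ hσP).2
      omega
  -- the injection from S into the subtype
  set g : {F : Finset (Finset (Fin n)) // F ∈ S} →
      {K : Finset (Finset (Fin n)) //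
        IsSimplicialComplex K ∧ HasDimension K d ∧ (maximalSimplices K).card = k} :=
    fun F => ⟨Φ F.1, (key F.1 F.2).1, (key F.1 F.2).2.1, keyk F.1 F.2⟩ with hg
  have hginj : Function.Injective g := by
    intro F1 F2 hEq
    have hΦeq : Φ F1.1 = Φ F2.1 := congrArg Subtype.val hEq
    apply Subtype.ext
    rw [(key F1.1 F1.2).2.2.2, (key F2.1 F2.2).2.2.2, hΦeq]
  have hinj : Function.Injective (f ∘ g) := hf.comp hginj
  have hle := Fintype.card_le_of_injective (f ∘ g) hinj
  rw [Fintype.card_coe] at hle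
  have hScard : S.card = Nat.choose (Nat.choose m (d + 1)) (k - n) := by
    rw [hS, Finset.card_powersetCard, Finset.card_powersetCard, hA]
  rw [hScard] at hle
  simp only [Fintype.card_fun, Fintype.card_bool, Fintype.card_fin] at hle
  omega
end

section
/- For every real ε ∈ (0,1) there exist a real constant c > 0 and a natural number N such that for all natural numbers n ≥ N, all natural numbers d with 2 ≤ d and (d : ℝ) ≤ (n : ℝ)^(ε/3), and all natural numbers k with (2/ε)·n ≤ (k : ℝ) and (k : ℝ) ≤ (n : ℝ)^((1−ε)·d), one has log₂ C(C(⌊n/2⌋, d+1), k − n) ≥ c · k · d · log₂ n. -/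
lemma pow_le_mul_choose : ∀ (r m : ℕ), r ≤ m → m ^ r ≤ r ^ r * m.choose r := by
  intro r
  induction r with
  | zero => simp
  | succ r ih =>
    intro m hm
    obtain ⟨m, rfl⟩ : ∃ m', m = m' + 1 := ⟨m - 1, by omega⟩
    have h1 : m ^ r ≤ r ^ r * m.choose r := ih m (by omega)
    have key : (m + 1) * r ≤ (r + 1) * m := by nlinarith
    have hrr : 0 < r ^ r := by
      cases r with
      | zero => simp
      | succ s => exact Nat.pow_pos (Nat.succ_pos s)
    have main : (m + 1) ^ (r + 1) * r ^ r ≤ (r + 1) ^ (r + 1) * (m + 1).choose (r + 1) * r ^ r := by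
      calc (m + 1) ^ (r + 1) * r ^ r = ((m + 1) * r) ^ r * (m + 1) := by
            rw [mul_pow]; ring
        _ ≤ ((r + 1) * m) ^ r * (m + 1) :=
            Nat.mul_le_mul_right _ (Nat.pow_le_pow_left key r)
        _ = (r + 1) ^ r * m ^ r * (m + 1) := by rw [mul_pow]
        _ ≤ (r + 1) ^ r * (r ^ r * m.choose r) * (m + 1) :=
            Nat.mul_le_mul_right _ (Nat.mul_le_mul_left _ h1)
        _ = (r + 1) ^ r * ((m + 1) * m.choose r) * r ^ r := by ring
        _ = (r + 1) ^ r * ((m + 1).choose (r + 1) * (r + 1)) * r ^ r := by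
            rw [← Nat.add_one_mul_choose_eq]
        _ = (r + 1) ^ (r + 1) * (m + 1).choose (r + 1) * r ^ r := by ring
    exact Nat.le_of_mul_le_mul_right main hrr

set_option maxHeartbeats 2000000 in
theorem stmt2 (ε : ℝ) (hε : ε ∈ Set.Ioo (0 : ℝ) 1) :
    ∃ c : ℝ, 0 < c ∧ ∃ N : ℕ, ∀ n : ℕ, N ≤ n →
      ∀ d : ℕ, 2 ≤ d → (d : ℝ) ≤ (n : ℝ) ^ (ε / 3) →
        ∀ k : ℕ, (2 / ε) * (n : ℝ) ≤ (k : ℝ) → (k : ℝ) ≤ (n : ℝ) ^ ((1 - ε) * (d : ℝ)) →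
          c * (k : ℝ) * (d : ℝ) * Real.logb 2 (n : ℝ) ≤
            Real.logb 2 ((Nat.choose (Nat.choose (n / 2) (d + 1)) (k - n) : ℕ) : ℝ) := by
  obtain ⟨hε0, hε1⟩ := hε
  obtain ⟨N, hN⟩ := exists_nat_ge (max ((8 : ℝ) ^ ((6 : ℝ) / ε)) 64)
  refine ⟨ε / 4, by positivity, N, ?_⟩
  intro n hn d hd2 hdn k hk1 hk2
  have hnR : max ((8 : ℝ) ^ ((6 : ℝ) / ε)) 64 ≤ (n : ℝ) := hN.trans (Nat.cast_le.mpr hn)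
  have hn64 : (64 : ℝ) ≤ n := (le_max_right _ _).trans hnR
  have hn1 : (1 : ℝ) ≤ n := by linarith
  have hn0 : (0 : ℝ) < n := by linarith
  have hd2R : (2 : ℝ) ≤ d := by exact_mod_cast hd2
  -- n^{ε/6} ≥ 8
  have h8 : (8 : ℝ) ≤ (n : ℝ) ^ (ε / 6) := by
    have h1 : ((8 : ℝ) ^ ((6 : ℝ) / ε)) ^ (ε / 6) ≤ (n : ℝ) ^ (ε / 6) :=
      Real.rpow_le_rpow (by positivity) ((le_max_left _ _).trans hnR) (by positivity)
    have h2 : (6 : ℝ) / ε * (ε / 6) = 1 := by field_simp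
    rwa [← Real.rpow_mul (by norm_num : (0 : ℝ) ≤ 8), h2, Real.rpow_one] at h1
  -- square root facts
  set a : ℝ := (n : ℝ) ^ ((1 : ℝ) / 2) with ha_def
  have ha0 : 0 < a := Real.rpow_pos_of_pos hn0 _
  have haa : a * a = n := by
    rw [ha_def, ← Real.rpow_add hn0]; norm_num
  have ha8 : (8 : ℝ) ≤ a := by nlinarith
  have han8 : a ≤ (n : ℝ) / 8 := by nlinarith
  -- M = ⌊n/2⌋ facts
  have hMn : (n : ℝ) ≤ 2 * (n / 2 : ℕ) + 1 := by
    have : n ≤ 2 * (n / 2) + 1 := by omega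
    exact_mod_cast this
  have hM4 : (n : ℝ) / 4 ≤ ((n / 2 : ℕ) : ℝ) := by linarith
  have hdsqrt : (n : ℝ) ^ (ε / 3) ≤ a := by
    rw [ha_def]
    exact Real.rpow_le_rpow_of_exponent_le hn1 (by linarith)
  have hdM : d + 1 ≤ n / 2 := by
    have hr : ((d : ℝ) + 1) ≤ ((n / 2 : ℕ) : ℝ) := by linarith
    exact_mod_cast hr
  -- lower bound on m = C(⌊n/2⌋, d+1)
  have h_m_lb : ((n / 2 : ℕ) : ℝ) ^ (d + 1) ≤ ((d : ℝ) + 1) ^ (d + 1) *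
      ((n / 2 : ℕ).choose (d + 1) : ℝ) := by
    have := pow_le_mul_choose (d + 1) (n / 2) hdM
    exact_mod_cast this
  set Y : ℝ := (n : ℝ) ^ (1 - ε / 2) with hY_def
  have hY0 : 0 < Y := Real.rpow_pos_of_pos hn0 _
  have hd10 : (0 : ℝ) < (d : ℝ) + 1 := by linarith
  have hYd : Y * ((d : ℝ) + 1) ≤ ((n / 2 : ℕ) : ℝ) := by
    have e1 : Y * (2 * (n : ℝ) ^ (ε / 3)) = 2 * (n : ℝ) ^ (1 - ε / 6) := by
      rw [hY_def, ← mul_assoc, mul_comm Y 2, mul_assoc, ← Real.rpow_add hn0]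
      ring_nf
    have e2 : (n : ℝ) ^ (1 - ε / 6) * (n : ℝ) ^ (ε / 6) = n := by
      rw [← Real.rpow_add hn0]; norm_num
    have h16 : (n : ℝ) ^ (1 - ε / 6) ≤ n / 8 := by
      nlinarith [Real.rpow_pos_of_pos hn0 (1 - ε / 6)]
    have step : Y * ((d : ℝ) + 1) ≤ Y * (2 * (n : ℝ) ^ (ε / 3)) := by
      apply mul_le_mul_of_nonneg_left _ hY0.le
      linarith
    calc Y * ((d : ℝ) + 1) ≤ 2 * (n : ℝ) ^ (1 - ε / 6) := by linarith [e1 ▸ step]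
      _ ≤ 2 * ((n : ℝ) / 8) := by linarith
      _ ≤ ((n / 2 : ℕ) : ℝ) := by linarith
  have h_m_lb2 : Y ^ (d + 1) ≤ ((n / 2 : ℕ).choose (d + 1) : ℝ) := by
    have hYM : Y ≤ ((n / 2 : ℕ) : ℝ) / ((d : ℝ) + 1) := by
      rw [le_div_iff₀ hd10]; exact hYd
    have h1 : Y ^ (d + 1) ≤ (((n / 2 : ℕ) : ℝ) / ((d : ℝ) + 1)) ^ (d + 1) :=
      pow_le_pow_left₀ hY0.le hYM _
    have h2 : (((n / 2 : ℕ) : ℝ) / ((d : ℝ) + 1)) ^ (d + 1) ≤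
        ((n / 2 : ℕ).choose (d + 1) : ℝ) := by
      rw [div_pow, div_le_iff₀ (by positivity)]
      calc ((n / 2 : ℕ) : ℝ) ^ (d + 1) ≤ ((d : ℝ) + 1) ^ (d + 1) *
            ((n / 2 : ℕ).choose (d + 1) : ℝ) := h_m_lb
        _ = ((n / 2 : ℕ).choose (d + 1) : ℝ) * ((d : ℝ) + 1) ^ (d + 1) := by ring
      
    linarith
  -- k facts
  have h2e : (2 : ℝ) ≤ 2 / ε := by
    rw [le_div_iff₀ hε0]; linarith
  have hk2n : 2 * (n : ℝ) ≤ k := by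
    calc 2 * (n : ℝ) ≤ (2 / ε) * n := mul_le_mul_of_nonneg_right h2e hn0.le
      _ ≤ k := hk1
  have hnk : n ≤ k := by
    have : (n : ℝ) ≤ k := by linarith
    exact_mod_cast this
  have hrcast : ((k - n : ℕ) : ℝ) = (k : ℝ) - n := by
    push_cast [hnk]; ring
  have hr_half : (k : ℝ) / 2 ≤ ((k - n : ℕ) : ℝ) := by rw [hrcast]; linarith
  have hk0 : (0 : ℝ) < k := by linarith
  have hr0 : (0 : ℝ) < ((k - n : ℕ) : ℝ) := by linarith
  have hr1 : 1 ≤ k - n := by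
    have : (1 : ℝ) ≤ ((k - n : ℕ) : ℝ) := by
      rw [hrcast]; linarith
    exact_mod_cast this
  set X : ℝ := (n : ℝ) ^ (ε * d / 2) with hX_def
  have hX0 : 0 < X := Real.rpow_pos_of_pos hn0 _
  have hX1 : 1 ≤ X := by
    rw [hX_def]
    calc (1 : ℝ) = (n : ℝ) ^ (0 : ℝ) := (Real.rpow_zero _).symm
      _ ≤ (n : ℝ) ^ (ε * d / 2) := Real.rpow_le_rpow_of_exponent_le hn1 (by positivity)
  -- X * r ≤ m
  have hYpow : Y ^ (d + 1) = (n : ℝ) ^ ((1 - ε / 2) * ((d : ℝ) + 1)) := by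
    rw [hY_def, ← Real.rpow_natCast ((n : ℝ) ^ (1 - ε / 2)) (d + 1),
      ← Real.rpow_mul hn0.le]
    push_cast
    ring_nf
  have hXr : X * ((k - n : ℕ) : ℝ) ≤ ((n / 2 : ℕ).choose (d + 1) : ℝ) := by
    have h1 : X * ((k - n : ℕ) : ℝ) ≤ X * (n : ℝ) ^ ((1 - ε) * d) := by
      apply mul_le_mul_of_nonneg_left _ hX0.le
      rw [hrcast]; linarith
    have h2 : X * (n : ℝ) ^ ((1 - ε) * d) = (n : ℝ) ^ (ε * d / 2 + (1 - ε) * d) := by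
      rw [hX_def, ← Real.rpow_add hn0]
    have h3 : (n : ℝ) ^ (ε * d / 2 + (1 - ε) * d) ≤
        (n : ℝ) ^ ((1 - ε / 2) * ((d : ℝ) + 1)) :=
      Real.rpow_le_rpow_of_exponent_le hn1 (by nlinarith)
    calc X * ((k - n : ℕ) : ℝ) ≤ (n : ℝ) ^ (ε * d / 2 + (1 - ε) * d) := by
          rw [← h2]; exact h1
      _ ≤ (n : ℝ) ^ ((1 - ε / 2) * ((d : ℝ) + 1)) := h3
      _ = Y ^ (d + 1) := hYpow.symm
      _ ≤ ((n / 2 : ℕ).choose (d + 1) : ℝ) := h_m_lb2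
  have hrm : k - n ≤ (n / 2).choose (d + 1) := by
    have h1 : ((k - n : ℕ) : ℝ) ≤ ((n / 2 : ℕ).choose (d + 1) : ℝ) := by
      nlinarith
    exact_mod_cast h1
  -- the choose lower bound, in ℝ
  have hC : X ^ ((k : ℝ) / 2) ≤ (((n / 2).choose (d + 1)).choose (k - n) : ℝ) := by
    have s1 : X ^ ((k : ℝ) / 2) ≤ X ^ (((k - n : ℕ) : ℝ)) :=
      Real.rpow_le_rpow_of_exponent_le hX1 hr_half
    have s2 : X ^ (((k - n : ℕ) : ℝ)) = X ^ (k - n : ℕ) := Real.rpow_natCast _ _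
    have s3 : X ^ (k - n : ℕ) ≤
        (((n / 2 : ℕ).choose (d + 1) : ℝ) / ((k - n : ℕ) : ℝ)) ^ (k - n : ℕ) := by
      apply pow_le_pow_left₀ hX0.le
      rw [le_div_iff₀ hr0]; exact hXr
    have s4 : (((n / 2 : ℕ).choose (d + 1) : ℝ) / ((k - n : ℕ) : ℝ)) ^ (k - n : ℕ) ≤
        (((n / 2).choose (d + 1)).choose (k - n) : ℝ) := by
      rw [div_pow, div_le_iff₀ (by positivity)]
      have := pow_le_mul_choose (k - n) ((n / 2).choose (d + 1)) hrm
      have hcast : (((n / 2 : ℕ).choose (d + 1) : ℝ)) ^ (k - n : ℕ) ≤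
          ((k - n : ℕ) : ℝ) ^ (k - n : ℕ) *
          (((n / 2).choose (d + 1)).choose (k - n) : ℝ) := by exact_mod_cast this
      linarith
    calc X ^ ((k : ℝ) / 2) ≤ X ^ (k - n : ℕ) := s2 ▸ s1
      _ ≤ _ := s3
      _ ≤ _ := s4
  have hlogb : Real.logb 2 (X ^ ((k : ℝ) / 2)) ≤
      Real.logb 2 (((n / 2).choose (d + 1)).choose (k - n) : ℝ) :=
    Real.logb_le_logb_of_le one_lt_two (by positivity) hC
  have heq : Real.logb 2 (X ^ ((k : ℝ) / 2)) = ε / 4 * k * d * Real.logb 2 n := by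
    rw [Real.logb_rpow_eq_mul_logb_of_pos hX0, hX_def,
      Real.logb_rpow_eq_mul_logb_of_pos hn0]
    ring
  linarith [heq ▸ hlogb]
end

section
/- Let K be a finite abstract simplicial complex on a finite linearly ordered vertex set V, and let K̂ = K ∪ {∅} (the simplices of K together with the empty face), with m = |K̂|. Call σ ∈ K̂ a leaf if there is no vertex v ∈ V with v strictly greater than every element of σ and σ ∪ {v} ∈ K. Then the number of leaves of K̂ is at least m/2. (Equivalently: at least half the nodes of the Simplex Tree of K are leaves.) -/
open Finset

section SimplexTree

variable {V : Type*} [LinearOrder V]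

/-- `σ ∪ {v}` is a child of `σ` in the Simplex Tree of `K`. -/
abbrev ExtendsAbove (K : Finset (Finset V)) (σ : Finset V) (v : V) : Prop :=
  (∀ w ∈ σ, w < v) ∧ insert v σ ∈ K

abbrev IsLeaf (K : Finset (Finset V)) (σ : Finset V) : Prop :=
  ¬ ∃ v, ExtendsAbove K σ v

theorem eq_of_insert_eq_insert_of_forall_lt {σ₁ σ₂ : Finset V} {v₁ v₂ : V}
    (h₁ : ∀ w ∈ σ₁, w < v₁) (h₂ : ∀ w ∈ σ₂, w < v₂) (h : insert v₁ σ₁ = insert v₂ σ₂) :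
    σ₁ = σ₂ := by
  have le_of_mem {v : V} {σ : Finset V} {u : V} (hσ : ∀ w ∈ σ, w < v) (hu : u ∈ insert v σ) :
      u ≤ v := by
    rcases mem_insert.1 hu with rfl | hu
    exacts [le_rfl, (hσ u hu).le]
  have hv : v₁ = v₂ :=
    le_antisymm (le_of_mem h₂ (h ▸ mem_insert_self v₁ σ₁))
      (le_of_mem h₁ (h ▸ mem_insert_self v₂ σ₂))
  subst hv
  rw [← erase_insert (fun hv => lt_irrefl _ (h₁ _ hv)), h,
    erase_insert (fun hv => lt_irrefl _ (h₂ _ hv))]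

theorem exists_max_extendsAbove {K : Finset (Finset V)} {σ : Finset V} (hσ : ¬ IsLeaf K σ) :
    ∃ v, ExtendsAbove K σ v ∧ ∀ w, ExtendsAbove K σ w → w ≤ v := by
  have hfin : {v | ExtendsAbove K σ v}.Finite :=
    (K.sup id).finite_toSet.subset fun v hv => mem_sup.2 ⟨_, hv.2, mem_insert_self v σ⟩
  exact Set.exists_max_image _ id hfin (not_not.1 hσ)

variable {K : Finset (Finset V)} (hK : ∀ σ ∈ K, ∀ τ, τ ⊆ σ → τ ≠ ∅ → τ ∈ K)
include hK

theorem isLeaf_insert_of_max_extendsAbove {σ : Finset V} {v : V} (hv : ExtendsAbove K σ v)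
    (hmax : ∀ w, ExtendsAbove K σ w → w ≤ v) : IsLeaf K (insert v σ) := by
  rintro ⟨w, hw_gt, hw_mem⟩
  have hvw : v < w := hw_gt v (mem_insert_self v σ)
  have hσw : ExtendsAbove K σ w :=
    ⟨fun u hu => (hv.1 u hu).trans hvw,
      hK _ hw_mem _ (insert_subset_insert w (subset_insert v σ)) (insert_ne_empty w σ)⟩
  exact (hmax w hσw).not_gt hvw

theorem card_filter_not_isLeaf_le (S : Finset (Finset V)) (hKS : K ⊆ S)
    [DecidablePred (IsLeaf K)] :
    #(S.filter (fun σ => ¬ IsLeaf K σ)) ≤ #(S.filter (IsLeaf K)) := by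
  choose top htop hmax using fun σ (hσ : ¬ IsLeaf K σ) => exists_max_extendsAbove hσ
  let child σ := if hσ : IsLeaf K σ then σ else insert (top σ hσ) σ
  refine card_le_card_of_injOn child (fun σ hσ => ?_) fun σ₁ hσ₁ σ₂ hσ₂ h => ?_
  · obtain ⟨-, hσ⟩ := mem_filter.1 hσ
    simp only [child, dif_neg hσ]
    exact mem_filter.2
      ⟨hKS (htop σ hσ).2, isLeaf_insert_of_max_extendsAbove hK (htop σ hσ) (hmax σ hσ)⟩
  · obtain ⟨-, hσ₁⟩ := mem_filter.1 hσ₁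
    obtain ⟨-, hσ₂⟩ := mem_filter.1 hσ₂
    simp only [child, dif_neg hσ₁, dif_neg hσ₂] at h
    exact eq_of_insert_eq_insert_of_forall_lt (htop σ₁ hσ₁).1 (htop σ₂ hσ₂).1 h

end SimplexTree

theorem stmt3 {V : Type*} [Fintype V] [LinearOrder V]
    (K : Finset (Finset V)) (hK : IsSimplicialComplex K) :
    ((insert (∅ : Finset V) K).card : ℝ) / 2 ≤
      (((insert (∅ : Finset V) K).filter
          (fun σ => ¬ ∃ v : V, (∀ w ∈ σ, w < v) ∧ insert v σ ∈ K)).card : ℝ) := by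
  set S := insert (∅ : Finset V) K
  have hsplit := card_filter_add_card_filter_not (s := S) (IsLeaf K)
  have hle := card_filter_not_isLeaf_le hK.2 S (subset_insert ∅ K)
  rw [div_le_iff₀ two_pos]
  exact_mod_cast (show #S ≤ #(S.filter (IsLeaf K)) * 2 by omega)
end

section
/- Let K be a finite abstract simplicial complex on a finite linearly ordered vertex set V, let m = |K| + 1 be the number of simplices of K counting the empty face, and let L_K be the language of K. Then the number of distinct nonempty left quotients u⁻¹L_K, taken over all words u ∈ List V, is at most m/2 + 1. (Equivalently: the minimal deterministic automaton recognizing L_K has at most m/2 + 1 states.) -/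
/-- The language of a simplicial complex `K`: the empty list together with all
strictly increasing lists whose set of entries is a simplex of `K`. -/
def simplexLang {V : Type*} [LinearOrder V] (K : Finset (Finset V)) : Set (List V) :=
  {[]} ∪ {l | l.Pairwise (· < ·) ∧ l.toFinset ∈ K}

/-- The left quotient `u⁻¹L = {w | u ++ w ∈ L}`. -/
def leftQuot {V : Type*} (L : Set (List V)) (u : List V) : Set (List V) :=
  {w | u ++ w ∈ L}

/-- The set of distinct nonempty left quotients of a language `L`. -/
def nonemptyQuotients {V : Type*} (L : Set (List V)) : Set (Set (List V)) :=
  {S | S.Nonempty ∧ ∃ u : List V, S = leftQuot L u}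

/-!
After a nonempty increasing word spelling a simplex `σ`, what may follow is an increasing word
above `σ` that spells, together with `σ`, a simplex; so apart from `L_K` itself the nonempty
quotients are indexed by simplices. A simplex that no vertex above it extends has quotient
`{[]}`, so there are at most `e + 2` quotients, `e` being the number of extendable simplices.
Adjoining the largest admissible vertex sends every extendable simplex, and the empty face,
to a non-extendable one, injectively since the simplex is recovered by removing the maximum;
hence `2e + 1 ≤ |K|`.
-/

namespace IsSimplicialComplex

variable {V : Type*} [DecidableEq V] {K : Finset (Finset V)}

theorem mem_of_subset (hK : IsSimplicialComplex K) {σ τ : Finset V} (hσ : σ ∈ K)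
    (hτσ : τ ⊆ σ) (hτ : τ.Nonempty) : τ ∈ K :=
  hK.2 σ hσ τ hτσ hτ.ne_empty

end IsSimplicialComplex

section

variable {V : Type*} [LinearOrder V] {K : Finset (Finset V)}

def extensions (K : Finset (Finset V)) (σ : Finset V) : Finset V :=
  (K.biUnion id).filter fun v => (∀ a ∈ σ, a < v) ∧ insert v σ ∈ K

theorem mem_extensions {σ : Finset V} {v : V} :
    v ∈ extensions K σ ↔ (∀ a ∈ σ, a < v) ∧ insert v σ ∈ K := by
  simp only [extensions, Finset.mem_filter, Finset.mem_biUnion, id, and_iff_right_iff_imp]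
  exact fun h => ⟨_, h.2, Finset.mem_insert_self v σ⟩

def extendableSimplices (K : Finset (Finset V)) : Finset (Finset V) :=
  K.filter fun σ => (extensions K σ).Nonempty

/-- The quotient of `L_K` by any nonempty increasing word with entry set `σ`. -/
def upperLinkLang (K : Finset (Finset V)) (σ : Finset V) : Set (List V) :=
  {w | w.Pairwise (· < ·) ∧ (∀ a ∈ σ, ∀ b ∈ w, a < b) ∧ σ ∪ w.toFinset ∈ K}

theorem leftQuot_simplexLang {u : List V} (hu : u ≠ []) (hus : u.Pairwise (· < ·)) :
    leftQuot (simplexLang K) u = upperLinkLang K u.toFinset := by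
  ext w
  simp only [leftQuot, simplexLang, upperLinkLang, Set.mem_ofPred_eq, Set.mem_union,
    Set.mem_singleton_iff, List.append_eq_nil_iff, hu, false_and, false_or,
    List.pairwise_append, List.toFinset_append, List.mem_toFinset, hus, true_and, and_assoc]

theorem pairwise_and_toFinset_mem_of_append_mem (hK : IsSimplicialComplex K) {u w : List V}
    (hu : u ≠ []) (h : u ++ w ∈ simplexLang K) : u.Pairwise (· < ·) ∧ u.toFinset ∈ K := by
  obtain h | ⟨hsorted, hmem⟩ := h
  · simp_all
  rw [List.pairwise_append] at hsorted
  rw [List.toFinset_append] at hmem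
  exact ⟨hsorted.1, hK.mem_of_subset hmem Finset.subset_union_left
    (List.toFinset_nonempty_iff u |>.mpr hu)⟩

theorem upperLinkLang_eq_singleton_nil (hK : IsSimplicialComplex K) {σ : Finset V}
    (hσ : σ ∈ K) (hext : extensions K σ = ∅) : upperLinkLang K σ = {[]} := by
  ext w
  refine ⟨fun ⟨_, hlt, hmem⟩ => ?_, ?_⟩
  · obtain _ | ⟨a, t⟩ := w
    · rfl
    have ha : a ∈ extensions K σ := by
      refine mem_extensions.mpr ⟨fun b hb => hlt b hb a List.mem_cons_self, ?_⟩
      refine hK.mem_of_subset hmem ?_ (Finset.insert_nonempty a σ)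
      exact Finset.insert_subset (by simp) Finset.subset_union_left
    simp [hext] at ha
  · rintro rfl
    simpa [upperLinkLang] using hσ

theorem nonemptyQuotients_subset (hK : IsSimplicialComplex K) :
    nonemptyQuotients (simplexLang K) ⊆ insert (simplexLang K) (upperLinkLang K '' K) := by
  rintro S ⟨⟨w, hw⟩, u, rfl⟩
  rcases eq_or_ne u [] with rfl | hu
  · left
    ext w
    simp [leftQuot]
  obtain ⟨hus, huK⟩ := pairwise_and_toFinset_mem_of_append_mem hK hu hw
  exact Or.inr ⟨u.toFinset, huK, (leftQuot_simplexLang hu hus).symm⟩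

theorem upperLinkLang_image_subset (hK : IsSimplicialComplex K) :
    upperLinkLang K '' K ⊆ insert {[]} (upperLinkLang K '' extendableSimplices K) := by
  rintro _ ⟨σ, hσ, rfl⟩
  rcases (extensions K σ).eq_empty_or_nonempty with hext | hext
  · exact Or.inl (upperLinkLang_eq_singleton_nil hK hσ hext)
  · exact Or.inr ⟨σ, Finset.mem_filter.mpr ⟨hσ, hext⟩, rfl⟩

theorem ncard_nonemptyQuotients_le (hK : IsSimplicialComplex K) :
    (nonemptyQuotients (simplexLang K)).ncard ≤ (extendableSimplices K).card + 2 := by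
  have hsub := (nonemptyQuotients_subset hK).trans
    (Set.insert_subset_insert (upperLinkLang_image_subset hK))
  have hfin := (((extendableSimplices K).finite_toSet.image (upperLinkLang K)).insert
    ({[]} : Set (List V))).insert (simplexLang K)
  calc (nonemptyQuotients (simplexLang K)).ncard
      ≤ (insert (simplexLang K) (insert {[]} (upperLinkLang K '' extendableSimplices K))).ncard :=
        Set.ncard_le_ncard hsub hfin
    _ ≤ (upperLinkLang K '' extendableSimplices K).ncard + 1 + 1 :=
        (Set.ncard_insert_le _ _).trans (Nat.add_le_add_right (Set.ncard_insert_le _ _) 1)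
    _ ≤ (extendableSimplices K).card + 2 := by
        have himage :=
          Set.ncard_image_le (f := upperLinkLang K) (extendableSimplices K).finite_toSet
        rw [Set.ncard_coe_finset] at himage
        omega

theorem extensions_empty_nonempty (hK : IsSimplicialComplex K) (hKne : K.Nonempty) :
    (extensions K ∅).Nonempty := by
  obtain ⟨σ, hσ⟩ := hKne
  obtain ⟨a, ha⟩ := Finset.nonempty_iff_ne_empty.mpr (hK.1 σ hσ)
  refine ⟨a, mem_extensions.mpr ⟨by simp, ?_⟩⟩
  simpa using
    hK.mem_of_subset hσ (Finset.singleton_subset_iff.mpr ha) (Finset.singleton_nonempty a)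

theorem extensions_insert_max'_eq_empty (hK : IsSimplicialComplex K) {σ : Finset V}
    (h : (extensions K σ).Nonempty) :
    extensions K (insert ((extensions K σ).max' h) σ) = ∅ := by
  set x := (extensions K σ).max' h
  refine Finset.eq_empty_of_forall_notMem fun v hv => ?_
  obtain ⟨hv_gt, hv_mem⟩ := mem_extensions.mp hv
  have hvσ : v ∈ extensions K σ := by
    refine mem_extensions.mpr ⟨fun a ha => hv_gt a (Finset.mem_insert_of_mem ha), ?_⟩
    refine hK.mem_of_subset hv_mem ?_ (Finset.insert_nonempty v σ)
    exact Finset.insert_subset_insert v (Finset.subset_insert x σ)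
  exact (hv_gt x (Finset.mem_insert_self x σ)).not_ge ((extensions K σ).le_max' v hvσ)

theorem filter_exists_lt_insert {σ : Finset V} {x : V} (hx : ∀ a ∈ σ, a < x) :
    (insert x σ).filter (fun a => ∃ b ∈ insert x σ, a < b) = σ := by
  ext a
  simp only [Finset.mem_filter, Finset.mem_insert, exists_eq_or_imp]
  constructor
  · rintro ⟨rfl | ha, hlt | ⟨b, hb, hlt⟩⟩
    · exact absurd hlt (lt_irrefl a)
    · exact absurd (hx b hb) (not_lt.mpr hlt.le)
    · exact ha
    · exact ha
  · exact fun ha => ⟨Or.inr ha, Or.inl (hx a ha)⟩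

theorem two_mul_card_extendableSimplices_lt (hK : IsSimplicialComplex K) (hKne : K.Nonempty) :
    2 * (extendableSimplices K).card < K.card := by
  set E := extendableSimplices K
  set U := K.filter fun σ => ¬(extensions K σ).Nonempty
  have hsplit : E.card + U.card = K.card := Finset.card_filter_add_card_filter_not _
  have h0E : (∅ : Finset V) ∉ E := fun h => hK.1 ∅ (Finset.mem_filter.mp h).1 rfl
  have hsurj : Set.SurjOn (fun τ : Finset V => τ.filter fun a => ∃ b ∈ τ, a < b) U
      (insert ∅ E : Finset (Finset V)) := by
    intro σ hσ
    have hext : (extensions K σ).Nonempty := by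
      rcases Finset.mem_insert.mp hσ with rfl | hσ
      · exact extensions_empty_nonempty hK hKne
      · exact (Finset.mem_filter.mp hσ).2
    obtain ⟨hlt, hmem⟩ := mem_extensions.mp ((extensions K σ).max'_mem hext)
    refine ⟨_, Finset.mem_filter.mpr ⟨hmem, ?_⟩, filter_exists_lt_insert hlt⟩
    rw [extensions_insert_max'_eq_empty hK hext]
    exact Finset.not_nonempty_empty
  have hcard := Finset.card_le_card_of_surjOn _ hsurj
  rw [Finset.card_insert_of_notMem h0E] at hcard
  omega

end

theorem stmt4_general {V : Type*} [LinearOrder V]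
    (K : Finset (Finset V)) (hK : IsSimplicialComplex K)
    (m : ℕ) (hm : m = K.card + 1) :
    ((nonemptyQuotients (simplexLang K)).ncard : ℝ) ≤ (m : ℝ) / 2 + 1 := by
  subst hm
  suffices h : 2 * (nonemptyQuotients (simplexLang K)).ncard ≤ K.card + 3 by
    have hreal : (2 * (nonemptyQuotients (simplexLang K)).ncard : ℝ) ≤ K.card + 3 := by
      exact_mod_cast h
    push_cast
    linarith
  rcases K.eq_empty_or_nonempty with rfl | hKne
  · have hquot := Set.ncard_le_ncard (nonemptyQuotients_subset hK)
    simp only [Finset.coe_empty, Set.image_empty, insert_empty_eq, Set.ncard_singleton] at hquot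
    omega
  · have hquot := ncard_nonemptyQuotients_le hK
    have hext := two_mul_card_extendableSimplices_lt hK hKne
    omega

theorem stmt4 {V : Type*} [Fintype V] [LinearOrder V]
    (K : Finset (Finset V)) (hK : IsSimplicialComplex K)
    (m : ℕ) (hm : m = K.card + 1) :
    ((nonemptyQuotients (simplexLang K)).ncard : ℝ) ≤ (m : ℝ) / 2 + 1 :=
  stmt4_general K hK m hm
end

section
/- Let K be a finite abstract simplicial complex on a finite linearly ordered vertex set V that is pure of dimension d. Let L_K be the language of K, and let L_K^max ⊆ List V be the language consisting of all strictly increasing lists whose set of entries is a maximal simplex of K. Then the number of distinct nonempty left quotients of L_K is at least the number of distinct nonempty left quotients of L_K^max. (Equivalently: the minimal deterministic automaton recognizing L_K has at least as many states as the minimal deterministic automaton recognizing L_K^max.) -/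
/-- `K` is pure of dimension `d`: `K` has dimension `d` and every maximal simplex
has exactly `d + 1` vertices. -/
def IsPure {V : Type*} [DecidableEq V] (K : Finset (Finset V)) (d : ℕ) : Prop :=
  HasDimension K d ∧ ∀ σ ∈ maximalSimplices K, σ.card = d + 1

/-- The language of maximal simplices of `K`: all strictly increasing lists whose set
of entries is a maximal simplex of `K`. -/
def maxSimplexLang {V : Type*} [LinearOrder V] (K : Finset (Finset V)) : Set (List V) :=
  {l | l.Pairwise (· < ·) ∧ l.toFinset ∈ maximalSimplices K}

/-!
If every word of `L` has length at most `n`, and `L'` consists of the words of `L` of length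
exactly `n`, then every nonempty quotient `u⁻¹L'` is the set of longest words of `u⁻¹L`. So
`Q ↦ longestWords Q` maps the nonempty quotients of `L` onto a superset of those of `L'`.
For a pure complex of dimension `d` this applies to `L_K` and `L_K^max` with `n = d + 1`,
because a strictly increasing list has as many entries as its set of entries.
-/

section Quotients

variable {α : Type*}

theorem finite_range_leftQuot {L : Set (List α)} (hL : L.Finite) :
    (Set.range (leftQuot L)).Finite := by
  have hsuffixes : {w : List α | ∃ l ∈ L, w <:+ l}.Finite := by
    have : {w : List α | ∃ l ∈ L, w <:+ l} = ⋃ l ∈ L, {w | w ∈ l.tails} := by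
      ext w
      simp [List.mem_tails]
    rw [this]
    exact hL.biUnion fun l _ => l.tails.finite_toSet
  refine hsuffixes.finite_subsets.subset ?_
  rintro _ ⟨u, rfl⟩ w hw
  exact ⟨u ++ w, hw, List.suffix_append u w⟩

def longestWords (Q : Set (List α)) : Set (List α) :=
  {w ∈ Q | ∀ w' ∈ Q, w'.length ≤ w.length}

theorem longestWords_leftQuot {L : Set (List α)} {n : ℕ} (hL : ∀ l ∈ L, l.length ≤ n)
    {u : List α} (hne : (leftQuot {l ∈ L | l.length = n} u).Nonempty) :
    longestWords (leftQuot L u) = leftQuot {l ∈ L | l.length = n} u := by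
  obtain ⟨w₀, hw₀L, hw₀n⟩ := hne
  ext w
  constructor
  · rintro ⟨hwL, hlongest⟩
    have h₁ := hlongest w₀ hw₀L
    have h₂ := hL _ hwL
    refine ⟨hwL, ?_⟩
    rw [List.length_append] at hw₀n h₂ ⊢
    omega
  · rintro ⟨hwL, hwn⟩
    refine ⟨hwL, fun w' hw' => ?_⟩
    have := hL _ hw'
    rw [List.length_append] at hwn this
    omega

theorem ncard_nonemptyQuotients_length_eq_le {L : Set (List α)} {n : ℕ} (hfin : L.Finite)
    (hL : ∀ l ∈ L, l.length ≤ n) :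
    (nonemptyQuotients {l ∈ L | l.length = n}).ncard ≤ (nonemptyQuotients L).ncard := by
  have hquot : (nonemptyQuotients L).Finite :=
    (finite_range_leftQuot hfin).subset fun _ ⟨_, u, hS⟩ => ⟨u, hS.symm⟩
  have hsub : nonemptyQuotients {l ∈ L | l.length = n} ⊆
      longestWords '' nonemptyQuotients L := by
    rintro _ ⟨hne, u, rfl⟩
    exact ⟨leftQuot L u, ⟨hne.mono fun _ hw => hw.1, u, rfl⟩, longestWords_leftQuot hL hne⟩
  calc (nonemptyQuotients {l ∈ L | l.length = n}).ncard
      ≤ (longestWords '' nonemptyQuotients L).ncard := Set.ncard_le_ncard hsub (hquot.image _)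
    _ ≤ (nonemptyQuotients L).ncard := Set.ncard_image_le hquot

end Quotients

section SimplexLanguages

variable {V : Type*} [LinearOrder V] {K : Finset (Finset V)}

theorem finite_simplexLang (K : Finset (Finset V)) : (simplexLang K).Finite := by
  refine (Set.finite_singleton []).union ((K.finite_toSet.image (·.sort)).subset ?_)
  rintro l ⟨hsorted, hK⟩
  exact ⟨l.toFinset, hK, (List.toFinset_sort _ hsorted.nodup).2 (hsorted.imp le_of_lt)⟩

theorem length_le_of_mem_simplexLang {n : ℕ} (hK : ∀ σ ∈ K, σ.card ≤ n) {l : List V}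
    (hl : l ∈ simplexLang K) : l.length ≤ n := by
  rcases hl with rfl | ⟨hsorted, hlK⟩
  · exact Nat.zero_le n
  · exact List.toFinset_card_of_nodup hsorted.nodup ▸ hK _ hlK

theorem mem_maximalSimplices_iff_card {d : ℕ} (hpure : IsPure K d) {σ : Finset V}
    (hσ : σ ∈ K) : σ ∈ maximalSimplices K ↔ σ.card = d + 1 := by
  refine ⟨hpure.2 σ, fun hcard => Finset.mem_filter.2 ⟨hσ, fun τ hτ hστ => ?_⟩⟩
  exact Finset.eq_of_subset_of_card_le hστ (hcard ▸ hpure.1.2 τ hτ)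

theorem maxSimplexLang_eq {d : ℕ} (hpure : IsPure K d) :
    maxSimplexLang K = {l ∈ simplexLang K | l.length = d + 1} := by
  ext l
  constructor
  · rintro ⟨hsorted, hmax⟩
    have hlK := (Finset.mem_filter.1 hmax).1
    refine ⟨Or.inr ⟨hsorted, hlK⟩, ?_⟩
    rw [← List.toFinset_card_of_nodup hsorted.nodup]
    exact (mem_maximalSimplices_iff_card hpure hlK).1 hmax
  · rintro ⟨hl | ⟨hsorted, hlK⟩, hlen⟩
    · simp [Set.mem_singleton_iff.1 hl] at hlen
    · refine ⟨hsorted, (mem_maximalSimplices_iff_card hpure hlK).2 ?_⟩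
      rw [List.toFinset_card_of_nodup hsorted.nodup, hlen]

end SimplexLanguages

theorem stmt5_general {V : Type*} [LinearOrder V]
    (K : Finset (Finset V)) (d : ℕ)
    (hpure : IsPure K d) :
    (nonemptyQuotients (maxSimplexLang K)).ncard ≤
      (nonemptyQuotients (simplexLang K)).ncard := by
  rw [maxSimplexLang_eq hpure]
  exact ncard_nonemptyQuotients_length_eq_le (finite_simplexLang K)
    fun _ => length_le_of_mem_simplexLang hpure.1.2

theorem stmt5 {V : Type*} [Fintype V] [LinearOrder V]
    (K : Finset (Finset V)) (d : ℕ)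
    (hK : IsSimplicialComplex K) (hpure : IsPure K d) :
    (nonemptyQuotients (maxSimplexLang K)).ncard ≤
      (nonemptyQuotients (simplexLang K)).ncard :=
  stmt5_general K d hpure
end

section
/- Let K be a finite abstract simplicial complex on the vertex set Fin n of dimension d ≥ 2. Then there exists a permutation π of Fin n such that, letting π(K) = { {π(v) : v ∈ σ} : σ ∈ K } be the relabeled complex, there exist two distinct words u ≠ u′ in L_{π(K)} with identical left quotients u⁻¹L_{π(K)} = u′⁻¹L_{π(K)}; consequently the number of distinct nonempty left quotients of L_{π(K)} is strictly less than |K| + 1. (Equivalently: some relabeling of the vertices makes the minimal Simplex Automaton strictly smaller than the Simplex Automaton.) -/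
section SimplexLanguage

variable {V : Type*} [LinearOrder V] {K : Finset (Finset V)}

lemma sort_mem_simplexLang {σ : Finset V} (hσ : σ ∈ K) :
    σ.sort (· ≤ ·) ∈ simplexLang K :=
  Or.inr ⟨(Finset.sortedLT_sort σ).pairwise, by rwa [Finset.sort_toFinset]⟩

lemma IsSimplicialComplex.mem_simplexLang_of_append_mem (hK : IsSimplicialComplex K)
    {u w : List V} (h : u ++ w ∈ simplexLang K) : u ∈ simplexLang K := by
  rcases h with h | ⟨hsorted, hmem⟩
  · exact Or.inl (List.append_eq_nil_iff.mp h).1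
  · rcases eq_or_ne u [] with rfl | hu
    · exact Or.inl rfl
    · refine Or.inr ⟨(List.pairwise_append.mp hsorted).1, hK.2 _ hmem _ ?_ ?_⟩
      · simp only [List.toFinset_append, Finset.subset_union_left]
      · simpa [← List.toFinset_eq_empty_iff] using hu

lemma leftQuot_simplexLang_eq_singleton_nil {u : List V} (hu : u ∈ simplexLang K) {t : V}
    (ht : ∀ x, x ≤ t) (htu : t ∈ u) : leftQuot (simplexLang K) u = {[]} := by
  ext w
  simp only [leftQuot, Set.mem_ofPred_eq, Set.mem_singleton_iff]
  refine ⟨fun hw => ?_, fun hw => by simpa [hw] using hu⟩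
  by_contra hw_ne
  obtain ⟨b, hb⟩ := List.exists_mem_of_ne_nil w hw_ne
  rcases hw with h | ⟨hsorted, _⟩
  · exact hw_ne (List.append_eq_nil_iff.mp h).2
  · exact (ht b).not_gt ((List.pairwise_append.mp hsorted).2.2 t htu b hb)

lemma leftQuot_sort_eq_singleton_nil {σ : Finset V} (hσ : σ ∈ K) {t : V} (ht : ∀ x, x ≤ t)
    (htσ : t ∈ σ) : leftQuot (simplexLang K) (σ.sort (· ≤ ·)) = {[]} :=
  leftQuot_simplexLang_eq_singleton_nil (sort_mem_simplexLang hσ) ht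
    ((Finset.mem_sort _).mpr htσ)

lemma IsSimplicialComplex.nonemptyQuotients_subset (hK : IsSimplicialComplex K) :
    nonemptyQuotients (simplexLang K) ⊆
      (fun σ : Finset V => leftQuot (simplexLang K) (σ.sort (· ≤ ·))) ''
        (↑(insert ∅ K) : Set (Finset V)) := by
  rintro _ ⟨⟨w, hw⟩, u, rfl⟩
  rcases hK.mem_simplexLang_of_append_mem hw with rfl | ⟨hsorted, hmem⟩
  · exact ⟨∅, by simp⟩
  · refine ⟨u.toFinset, Finset.mem_insert_of_mem hmem, ?_⟩
    simp only [(List.toFinset_sort _ hsorted.nodup).mpr (hsorted.imp le_of_lt)]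

lemma IsSimplicialComplex.ncard_nonemptyQuotients_lt (hK : IsSimplicialComplex K)
    {σ τ : Finset V} (hσ : σ ∈ K) (hτ : τ ∈ K) (hne : σ ≠ τ)
    (hquot : leftQuot (simplexLang K) (σ.sort (· ≤ ·)) =
      leftQuot (simplexLang K) (τ.sort (· ≤ ·))) :
    (nonemptyQuotients (simplexLang K)).ncard < K.card + 1 := by
  set q := fun σ : Finset V => leftQuot (simplexLang K) (σ.sort (· ≤ ·))
  have hnot_inj : ¬ Set.InjOn q ↑(insert ∅ K) := fun hinj =>
    hne (hinj (Finset.mem_insert_of_mem hσ) (Finset.mem_insert_of_mem hτ) hquot)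
  have hcard : (↑(insert ∅ K) : Set (Finset V)).ncard = K.card + 1 := by
    rw [Set.ncard_coe_finset, Finset.card_insert_of_notMem fun h => hK.1 ∅ h rfl]
  calc (nonemptyQuotients (simplexLang K)).ncard
      ≤ (q '' ↑(insert ∅ K)).ncard := Set.ncard_le_ncard hK.nonemptyQuotients_subset
    _ < K.card + 1 := hcard ▸ lt_of_le_of_ne Set.ncard_image_le
      (mt (Set.ncard_image_iff (Finset.finite_toSet _)).mp hnot_inj)

end SimplexLanguage

section Relabeling

variable {V W : Type*} [DecidableEq V] [DecidableEq W]

lemma IsSimplicialComplex.image_equiv {K : Finset (Finset V)} (hK : IsSimplicialComplex K)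
    (e : V ≃ W) : IsSimplicialComplex (K.image (fun σ => σ.image e)) := by
  refine ⟨?_, ?_⟩
  · rintro _ hσ'
    obtain ⟨σ, hσ, rfl⟩ := Finset.mem_image.mp hσ'
    simpa [Finset.image_eq_empty] using hK.1 σ hσ
  · rintro _ hσ' τ hτσ hτ
    obtain ⟨σ, hσ, rfl⟩ := Finset.mem_image.mp hσ'
    refine Finset.mem_image.mpr ⟨τ.image e.symm, hK.2 σ hσ _ ?_ ?_, ?_⟩
    · intro x hx
      obtain ⟨y, hy, rfl⟩ := Finset.mem_image.mp hx
      obtain ⟨z, hz, rfl⟩ := Finset.mem_image.mp (hτσ hy)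
      simpa using hz
    · simpa [Finset.image_eq_empty] using hτ
    · simp [Finset.image_image]

end Relabeling

theorem stmt7 (n d : ℕ) (K : Finset (Finset (Fin n)))
    (hK : IsSimplicialComplex K) (hdim : HasDimension K d) (hd : 2 ≤ d) :
    ∃ π : Equiv.Perm (Fin n),
      (∃ u u' : List (Fin n),
          u ∈ simplexLang (K.image (fun σ => σ.image π)) ∧
          u' ∈ simplexLang (K.image (fun σ => σ.image π)) ∧ u ≠ u' ∧
          leftQuot (simplexLang (K.image (fun σ => σ.image π))) u =
            leftQuot (simplexLang (K.image (fun σ => σ.image π))) u') ∧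
      (nonemptyQuotients (simplexLang (K.image (fun σ => σ.image π)))).ncard <
        K.card + 1 := by
  obtain ⟨σ, hσK, hσcard⟩ := hdim.1
  obtain ⟨v, hv⟩ := Finset.card_pos.mp (show 0 < σ.card by omega)
  have : Nonempty (Fin n) := ⟨v⟩
  obtain ⟨t, ht⟩ := Finite.exists_max (id : Fin n → Fin n)
  let π := Equiv.swap v t
  let K' := K.image (fun σ => σ.image π)
  have hK' : IsSimplicialComplex K' := hK.image_equiv π
  have hπσ : σ.image π ∈ K' := Finset.mem_image_of_mem _ hσK
  have htπσ : t ∈ σ.image π := Finset.mem_image.mpr ⟨v, hv, Equiv.swap_apply_left v t⟩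
  have ht_mem : {t} ∈ K' := hK'.2 _ hπσ _ (Finset.singleton_subset_iff.mpr htπσ) (by simp)
  have hne : {t} ≠ σ.image π := fun h => by
    have := congrArg Finset.card h
    rw [Finset.card_singleton, Finset.card_image_of_injective _ π.injective] at this
    omega
  have hquot := (leftQuot_sort_eq_singleton_nil ht_mem ht (Finset.mem_singleton_self t)).trans
    (leftQuot_sort_eq_singleton_nil hπσ ht htπσ).symm
  refine ⟨π, ⟨_, _, sort_mem_simplexLang ht_mem, sort_mem_simplexLang hπσ,
    fun h => hne ?_, hquot⟩, ?_⟩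
  · simpa only [Finset.sort_toFinset] using congrArg List.toFinset h
  · simpa only [K', Finset.card_image_of_injective _ (Finset.image_injective π.injective)]
      using hK'.ncard_nonemptyQuotients_lt ht_mem hπσ hne hquot
end

section
/- Fix k ≥ 1 and let K be the abstract simplicial complex on vertex set {1, 2, …, 2k+1} (with the natural order) whose simplices are all nonempty subsets of the k sets m_i = ({1, …, k+1} \ {i}) ∪ {k+1+i} for 1 ≤ i ≤ k. Then the left quotients w_s⁻¹L_K, where for each subset s ⊆ {1, …, k} the word w_s is the strictly increasing list of the elements of s, are pairwise distinct over the 2^k subsets s. Consequently, every deterministic finite automaton over the alphabet {1, …, 2k+1} accepting L_K has at least 2^k states. -/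
/-!
Appending the word `[k+1, k+1+i]` to `w_s` gives a word of `L_K` exactly when `i ∉ s`: the
letter `k+1+i` lies in no facet other than `m_i`, and `m_i` contains every vertex `≤ k+1`
except `i`. So these test words separate the quotients `w_s⁻¹L_K`. In a DFA the quotient of a
word is determined by the state it leads to, so the `2^k` words `w_s` reach distinct states.
-/

/-- The maximal simplex `m_i = ({1, …, k+1} \ {i}) ∪ {k+1+i}`. -/
def mSimplex (k i : ℕ) : Finset ℕ :=
  ((Finset.Icc 1 (k + 1)).erase i) ∪ {k + 1 + i}

/-- The simplicial complex on `{1, …, 2k+1}` whose simplices are all nonempty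
subsets of the sets `m_i`, `1 ≤ i ≤ k`. -/
def exampleComplex (k : ℕ) : Set (Finset ℕ) :=
  {σ | σ.Nonempty ∧ ∃ i ∈ Finset.Icc 1 k, σ ⊆ mSimplex k i}

/-- The language of a simplicial complex `K`: the empty list together with all
strictly increasing lists whose set of entries is a simplex of `K`. -/
def langOf (K : Set (Finset ℕ)) : Set (List ℕ) :=
  {[]} ∪ {l | l.Pairwise (· < ·) ∧ l.toFinset ∈ K}

theorem DFA.card_le_of_injOn_leftQuot {α Q ι : Type*} [Fintype Q] (M : DFA α Q)
    {L : Set (List α)} (hM : ∀ w, w ∈ M.accepts ↔ w ∈ L) {S : Finset ι} {f : ι → List α}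
    (hf : Set.InjOn (leftQuot L ∘ f) S) : S.card ≤ Fintype.card Q := by
  obtain rfl : M.accepts = L := Set.ext hM
  have hquot : leftQuot M.accepts ∘ f = M.acceptsFrom ∘ (M.eval ∘ f) :=
    funext fun x => Language.leftQuotient_accepts_apply M (f x)
  rw [hquot] at hf
  exact Finset.card_le_card_of_injOn (M.eval ∘ f) (fun _ _ => Finset.mem_univ _) hf.of_comp

theorem subset_mSimplex_iff {k j : ℕ} {s : Finset ℕ} (hs : s ⊆ Finset.Icc 1 (k + 1)) :
    s ⊆ mSimplex k j ↔ j ∉ s := by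
  constructor
  · intro h hj
    have := h hj
    simp only [mSimplex, Finset.mem_union, Finset.mem_erase, Finset.mem_singleton] at this
    have := Finset.mem_Icc.1 (hs hj)
    omega
  · intro hj x hx
    simp only [mSimplex, Finset.mem_union, Finset.mem_erase]
    exact Or.inl ⟨fun h => hj (h ▸ hx), hs hx⟩

theorem add_mem_mSimplex_iff {k i j : ℕ} (hi : 1 ≤ i) : k + 1 + i ∈ mSimplex k j ↔ j = i := by
  simp only [mSimplex, Finset.mem_union, Finset.mem_erase, Finset.mem_Icc, Finset.mem_singleton]
  omega

theorem sort_append_mem_langOf_exampleComplex_iff {k i : ℕ} {s : Finset ℕ}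
    (hs : s ⊆ Finset.Icc 1 k) (hi : i ∈ Finset.Icc 1 k) :
    s.sort (· ≤ ·) ++ [k + 1, k + 1 + i] ∈ langOf (exampleComplex k) ↔ i ∉ s := by
  obtain ⟨hi1, hik⟩ := Finset.mem_Icc.1 hi
  have hs' : s ⊆ Finset.Icc 1 (k + 1) := hs.trans (Finset.Icc_subset_Icc_right k.le_succ)
  have hsorted : (s.sort (· ≤ ·) ++ [k + 1, k + 1 + i]).Pairwise (· < ·) := by
    refine List.pairwise_append.2 ⟨(Finset.sortedLT_sort s).pairwise, by simp; omega, ?_⟩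
    intro x hx y hy
    have := Finset.mem_Icc.1 (hs ((Finset.mem_sort _).1 hx))
    simp only [List.mem_cons, List.not_mem_nil, or_false] at hy
    omega
  have hfin : (s.sort (· ≤ ·) ++ [k + 1, k + 1 + i]).toFinset =
      insert (k + 1) (insert (k + 1 + i) s) := by
    ext; simp
  simp only [langOf, exampleComplex, Set.mem_union, Set.mem_singleton_iff, List.append_eq_nil_iff,
    List.cons_ne_nil, and_false, false_or, Set.mem_ofPred_eq, hsorted, true_and, hfin,
    Finset.insert_nonempty, Finset.insert_subset_iff, add_mem_mSimplex_iff hi1,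
    subset_mSimplex_iff hs']
  constructor
  · rintro ⟨j, -, -, rfl, hj⟩
    exact hj
  · intro his
    refine ⟨i, hi, ?_, rfl, his⟩
    simp only [mSimplex, Finset.mem_union, Finset.mem_erase, Finset.mem_Icc]
    omega

theorem injOn_leftQuot_sort_exampleComplex (k : ℕ) :
    Set.InjOn (fun s : Finset ℕ => leftQuot (langOf (exampleComplex k)) (s.sort (· ≤ ·)))
      (Finset.Icc 1 k).powerset := by
  intro s hs t ht hst
  rw [Finset.coe_powerset, Set.mem_preimage, Set.mem_powerset_iff, Finset.coe_subset] at hs ht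
  ext i
  by_cases hi : i ∈ Finset.Icc 1 k
  · have h := congrArg ([k + 1, k + 1 + i] ∈ ·) hst
    simp only [leftQuot, Set.mem_ofPred_eq, eq_iff_iff,
      sort_append_mem_langOf_exampleComplex_iff hs hi,
      sort_append_mem_langOf_exampleComplex_iff ht hi] at h
    exact not_iff_not.1 h
  · exact iff_of_false (fun h => hi (hs h)) (fun h => hi (ht h))

theorem stmt8_general (k : ℕ) :
    (∀ s t : Finset ℕ, s ⊆ Finset.Icc 1 k → t ⊆ Finset.Icc 1 k →
        leftQuot (langOf (exampleComplex k)) (s.sort (· ≤ ·)) =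
          leftQuot (langOf (exampleComplex k)) (t.sort (· ≤ ·)) → s = t) ∧
    (∀ (Q : Type) [Fintype Q] (M : DFA ℕ Q),
        (∀ w : List ℕ, w ∈ M.accepts ↔ w ∈ langOf (exampleComplex k)) →
          2 ^ k ≤ Fintype.card Q) := by
  refine ⟨fun s t hs ht => injOn_leftQuot_sort_exampleComplex k
    (Finset.mem_powerset.2 hs) (Finset.mem_powerset.2 ht), fun Q _ M hM => ?_⟩
  calc 2 ^ k = (Finset.Icc 1 k).powerset.card := by simp
    _ ≤ Fintype.card Q :=
      M.card_le_of_injOn_leftQuot hM (injOn_leftQuot_sort_exampleComplex k)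

theorem stmt8 (k : ℕ) (hk : 1 ≤ k) :
    (∀ s t : Finset ℕ, s ⊆ Finset.Icc 1 k → t ⊆ Finset.Icc 1 k →
        leftQuot (langOf (exampleComplex k)) (s.sort (· ≤ ·)) =
          leftQuot (langOf (exampleComplex k)) (t.sort (· ≤ ·)) → s = t) ∧
    (∀ (Q : Type) [Fintype Q] (M : DFA ℕ Q),
        (∀ w : List ℕ, w ∈ M.accepts ↔ w ∈ langOf (exampleComplex k)) →
          2 ^ k ≤ Fintype.card Q) :=
  stmt8_general k
end

section
/- Let G be a finite simple graph on a finite vertex type X. Define the graph G′ on the vertex type X ⊕ Bool, where: (inl x) is adjacent to (inl y) iff x is adjacent to y in G; the vertex u = inr true is adjacent to every vertex inl x (x ∈ X) and to v = inr false; and v = inr false is adjacent only to u. Then for every natural number α: G has a vertex cover of size at most α if and only if G′ has a vertex cover of size at most α + 1. -/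
/-- `C` is a vertex cover of `G`: every edge has at least one endpoint in `C`. -/
def IsVertexCover {V : Type*} (G : SimpleGraph V) (C : Set V) : Prop :=
  ∀ ⦃u v : V⦄, G.Adj u v → u ∈ C ∨ v ∈ C

/-- The 'King-Maker' graph obtained from `G` by adding a king `inr true`
(adjacent to everything else) and a degree-one vertex `inr false`
(adjacent only to the king). -/
def kingMaker {X : Type*} (G : SimpleGraph X) : SimpleGraph (X ⊕ Bool) where
  Adj a b :=
    match a, b with
    | .inl x, .inl y => G.Adj x y
    | .inl _, .inr c => c = true
    | .inr b, .inl _ => b = true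
    | .inr b, .inr c => b ≠ c
  symm := by
    refine ⟨?_⟩
    rintro (x | b) (y | c) h
    · exact G.adj_symm h
    · exact h
    · exact h
    · exact h.symm
  loopless := by
    refine ⟨?_⟩
    rintro (x | b) h
    · exact G.irrefl h
    · exact h rfl

/-! Adding the king `u` to a cover of `G` covers `G′`, since every new edge meets `u`.
Conversely, a cover of `G′` restricts to a cover of `G`, and it must also contain `u` or the
pendant vertex `v` to cover the edge `uv`, so its restriction is at least one vertex smaller. -/

theorem IsVertexCover.comap {V W : Type*} {G : SimpleGraph V} {H : SimpleGraph W} (f : G →g H)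
    {C : Set W} (hC : IsVertexCover H C) : IsVertexCover G (f ⁻¹' C) :=
  fun _ _ h => hC (f.map_adj h)

namespace kingMaker

variable {X : Type*} (G : SimpleGraph X)

def inlHom : G →g kingMaker G where
  toFun := Sum.inl
  map_rel' h := h

theorem adj_inr_true_inr_false : (kingMaker G).Adj (Sum.inr true) (Sum.inr false) :=
  nofun

theorem isVertexCover_insert_inr_true {C : Set X} (hC : IsVertexCover G C) :
    IsVertexCover (kingMaker G) (insert (Sum.inr true) (Sum.inl '' C)) := by
  rintro (x | b) (y | c) h
  · exact (hC h).imp (Or.inr ⟨x, ·, rfl⟩) (Or.inr ⟨y, ·, rfl⟩)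
  · exact Or.inr (Or.inl (congrArg Sum.inr h))
  · exact Or.inl (Or.inl (congrArg Sum.inr h))
  · cases b <;> cases c <;> simp_all [kingMaker]

theorem exists_inr_mem_of_isVertexCover {C' : Set (X ⊕ Bool)}
    (hC' : IsVertexCover (kingMaker G) C') : ∃ b, Sum.inr b ∈ C' :=
  (hC' (adj_inr_true_inr_false G)).elim (⟨true, ·⟩) (⟨false, ·⟩)

end kingMaker

theorem Set.ncard_preimage_inl_add_one_le {α β : Type*} {C : Set (α ⊕ β)} (hC : C.Finite)
    {b : β} (hb : Sum.inr b ∈ C) : (Sum.inl ⁻¹' C).ncard + 1 ≤ C.ncard := by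
  have hnotMem : Sum.inr b ∉ Sum.inl '' (Sum.inl ⁻¹' C) := by
    rintro ⟨x, -, hx⟩
    exact Sum.inl_ne_inr hx
  have hsub : insert (Sum.inr b) (Sum.inl '' (Sum.inl ⁻¹' C)) ⊆ C :=
    Set.insert_subset hb (Set.image_preimage_subset _ _)
  calc (Sum.inl ⁻¹' C).ncard + 1
      = (insert (Sum.inr b) (Sum.inl '' (Sum.inl ⁻¹' C))).ncard := by
        rw [Set.ncard_insert_of_notMem hnotMem (hC.subset (Set.image_preimage_subset _ _)),
          Set.ncard_image_of_injective _ Sum.inl_injective]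
    _ ≤ C.ncard := Set.ncard_le_ncard hsub hC

theorem stmt11 {X : Type*} [Fintype X] (G : SimpleGraph X) (α : ℕ) :
    (∃ C : Set X, IsVertexCover G C ∧ C.ncard ≤ α) ↔
    (∃ C' : Set (X ⊕ Bool), IsVertexCover (kingMaker G) C' ∧ C'.ncard ≤ α + 1) := by
  constructor
  · rintro ⟨C, hC, hcard⟩
    refine ⟨_, kingMaker.isVertexCover_insert_inr_true G hC, ?_⟩
    calc (insert (Sum.inr true) (Sum.inl '' C)).ncard
        ≤ (Sum.inl '' C).ncard + 1 := Set.ncard_insert_le _ _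
      _ = C.ncard + 1 := by rw [Set.ncard_image_of_injective _ Sum.inl_injective]
      _ ≤ α + 1 := by omega
  · rintro ⟨C', hC', hcard⟩
    obtain ⟨b, hb⟩ := kingMaker.exists_inr_mem_of_isVertexCover G hC'
    have hlt := Set.ncard_preimage_inl_add_one_le (Set.toFinite C') hb
    exact ⟨Sum.inl ⁻¹' C', hC'.comap (kingMaker.inlHom G), by omega⟩
end

section
/- Let V be a finite linearly ordered vertex set, let M be a finite set of nonempty finite subsets of V forming an antichain under inclusion, and let K be the simplicial complex generated by M (all nonempty subsets of members of M), so that M is exactly the set of maximal simplices of K. Define the Simplex Array List digraph D as follows. Its node set is {(a, some b, m) : m ∈ M, a ∈ m, b ∈ m, a < b} ∪ {(a, none, m) : m ∈ M, a = max m}, and there is a directed edge from node (a, some b, m) to node (b, x, m′) whenever m′ = m and (b, x, m) is a node of D. Then: (i) for every directed path n₀ → n₁ → ⋯ → n_r in D, the first coordinates a₀, a₁, …, a_r are strictly increasing and the set {a₀, …, a_r} is a simplex of K; and (ii) for every nonempty simplex σ ∈ K there exists a directed path in D whose sequence of first coordinates is exactly the elements of σ listed in increasing order. -/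
/-!
Along an edge `(a, some b, m) → (b, x, m)` the first coordinate increases and the maximal
simplex `m` is kept, so a path lists, in increasing order, vertices of one `m ∈ M`.
Conversely, a simplex `σ ⊆ m` sorted as `a₀ < ⋯ < a_r` is traced by the path
`(a₀, some a₁, m) → ⋯ → (a_r, x, m)`, whose last node points to any vertex of `m` above `a_r`,
or is the `none`-node of `m` when `a_r = max m`.
-/

/-- The simplicial complex generated by the family `M` of maximal simplices:
all nonempty subsets of members of `M`. -/
def genComplex {V : Type*} [DecidableEq V] (M : Finset (Finset V)) : Set (Finset V) :=
  {σ | σ ≠ ∅ ∧ ∃ m ∈ M, σ ⊆ m}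

/-- A node of the Simplex Array List: `(a, some b, m)` with `m ∈ M`, `a, b ∈ m`,
`a < b`, or `(a, none, m)` with `m ∈ M` and `a` the maximum of `m`. -/
def SALNode {V : Type*} [LinearOrder V] (M : Finset (Finset V))
    (p : V × Option V × Finset V) : Prop :=
  p.2.2 ∈ M ∧ p.1 ∈ p.2.2 ∧
    match p.2.1 with
    | some b => b ∈ p.2.2 ∧ p.1 < b
    | none => ∀ x ∈ p.2.2, x ≤ p.1

/-- A directed edge of the Simplex Array List: from a node `(a, some b, m)` to a
node `(b, x, m)` (same maximal simplex `m`). -/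
def SALEdge {V : Type*} [LinearOrder V] (M : Finset (Finset V))
    (p q : V × Option V × Finset V) : Prop :=
  SALNode M p ∧ SALNode M q ∧ p.2.1 = some q.1 ∧ q.2.2 = p.2.2

section

variable {V : Type*} [LinearOrder V] {M : Finset (Finset V)}

theorem SALEdge.fst_lt {p q : V × Option V × Finset V} (h : SALEdge M p q) : p.1 < q.1 := by
  obtain ⟨⟨-, -, hp⟩, -, hpq, -⟩ := h
  rw [hpq] at hp
  exact hp.2

theorem pairwise_map_fst_of_isChain_salEdge {l : List (V × Option V × Finset V)}
    (hl : l.IsChain (SALEdge M)) : (l.map Prod.fst).Pairwise (· < ·) :=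
  List.isChain_iff_pairwise.mp <| List.isChain_map _ |>.mpr <| hl.imp fun _ _ h => h.fst_lt

theorem snd_snd_eq_of_isChain_salEdge {p : V × Option V × Finset V} {l : List (V × Option V × Finset V)}
    (hl : (p :: l).IsChain (SALEdge M)) {q : V × Option V × Finset V} (hq : q ∈ l) :
    q.2.2 = p.2.2 := by
  have hEq : ((p :: l).map (·.2.2)).Pairwise (· = ·) :=
    List.isChain_iff_pairwise.mp <| List.isChain_map _ |>.mpr <| hl.imp fun _ _ h => h.2.2.2.symm
  rw [List.map_cons, List.pairwise_cons] at hEq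
  exact (hEq.1 _ (List.mem_map_of_mem hq)).symm

theorem toFinset_map_fst_mem_genComplex {l : List (V × Option V × Finset V)} (hne : l ≠ [])
    (hnode : ∀ p ∈ l, SALNode M p) (hl : l.IsChain (SALEdge M)) :
    (l.map Prod.fst).toFinset ∈ genComplex M := by
  obtain ⟨p, l, rfl⟩ := List.exists_cons_of_ne_nil hne
  refine ⟨by simp, p.2.2, (hnode p (by simp)).1, ?_⟩
  intro a ha
  simp only [List.map_cons, List.toFinset_cons, Finset.mem_insert, List.mem_toFinset,
    List.mem_map] at ha
  rcases ha with rfl | ⟨q, hq, rfl⟩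
  · exact (hnode p (by simp)).2.1
  · rw [← snd_snd_eq_of_isChain_salEdge hl hq]
    exact (hnode q (List.mem_cons_of_mem _ hq)).2.1

/-- The second coordinate of the last node of a path inside `m` ending at `a`. -/
noncomputable def salExit (m : Finset V) (a : V) : Option V :=
  if h : ∃ b ∈ m, a < b then some h.choose else none

theorem salNode_salExit {m : Finset V} {a : V} (hm : m ∈ M) (ha : a ∈ m) :
    SALNode M (a, salExit m a, m) := by
  refine ⟨hm, ha, ?_⟩
  unfold salExit
  split_ifs with h
  · exact h.choose_spec
  · push Not at h
    exact h

noncomputable def salPath (m : Finset V) : List V → List (V × Option V × Finset V)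
  | [] => []
  | [a] => [(a, salExit m a, m)]
  | a :: b :: l => (a, some b, m) :: salPath m (b :: l)

theorem map_fst_salPath (m : Finset V) : ∀ l : List V, (salPath m l).map Prod.fst = l
  | [] => rfl
  | [_] => rfl
  | a :: b :: l => by rw [salPath, List.map_cons, map_fst_salPath m (b :: l)]

theorem salPath_cons (m : Finset V) (a : V) (l : List V) :
    ∃ x rest, salPath m (a :: l) = (a, x, m) :: rest := by
  cases l with
  | nil => exact ⟨_, _, rfl⟩
  | cons b l => exact ⟨_, _, rfl⟩

theorem salNode_of_mem_salPath {m : Finset V} (hm : m ∈ M) :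
    ∀ {l : List V}, l.IsChain (· < ·) → (∀ a ∈ l, a ∈ m) → ∀ p ∈ salPath m l, SALNode M p
  | [], _, _ => by simp [salPath]
  | [a], _, hlm => by simpa [salPath] using salNode_salExit hm (hlm a (by simp))
  | a :: b :: l, hl, hlm => by
      rw [List.isChain_cons_cons] at hl
      intro p hp
      rcases List.mem_cons.mp hp with rfl | hp
      · exact ⟨hm, hlm a (by simp), hlm b (by simp), hl.1⟩
      · exact salNode_of_mem_salPath hm hl.2 (fun x hx => hlm x (List.mem_cons_of_mem a hx)) p hp

theorem isChain_salPath {m : Finset V} (hm : m ∈ M) :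
    ∀ {l : List V}, l.IsChain (· < ·) → (∀ a ∈ l, a ∈ m) → (salPath m l).IsChain (SALEdge M)
  | [], _, _ => List.IsChain.nil
  | [_], _, _ => List.IsChain.singleton _
  | a :: b :: l, hl, hlm => by
      have hnode := salNode_of_mem_salPath hm hl hlm
      have htail := isChain_salPath hm (List.isChain_cons_cons.mp hl).2
        (fun x hx => hlm x (List.mem_cons_of_mem a hx))
      obtain ⟨x, rest, hpath⟩ := salPath_cons m b l
      rw [salPath, hpath] at hnode
      rw [hpath] at htail
      rw [salPath, hpath, List.isChain_cons_cons]
      exact ⟨⟨hnode _ (by simp), hnode _ (by simp), rfl, rfl⟩, htail⟩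

end

theorem stmt13_general {V : Type*} [LinearOrder V] (M : Finset (Finset V)) :
    (∀ l : List (V × Option V × Finset V), l ≠ [] →
        (∀ p ∈ l, SALNode M p) → l.Chain' (SALEdge M) →
        (l.map Prod.fst).Pairwise (· < ·) ∧ (l.map Prod.fst).toFinset ∈ genComplex M) ∧
    (∀ σ : Finset V, σ ∈ genComplex M →
        ∃ l : List (V × Option V × Finset V), l ≠ [] ∧
          (∀ p ∈ l, SALNode M p) ∧ l.Chain' (SALEdge M) ∧
          l.map Prod.fst = σ.sort (· ≤ ·)) := by
  refine ⟨fun l hne hnode hl =>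
    ⟨pairwise_map_fst_of_isChain_salEdge hl, toFinset_map_fst_mem_genComplex hne hnode hl⟩, ?_⟩
  rintro σ ⟨hσ, m, hm, hσm⟩
  obtain ⟨a, ha⟩ := Finset.nonempty_iff_ne_empty.mpr hσ
  have hsorted := σ.sortedLT_sort.isChain
  have hsub : ∀ a ∈ σ.sort (· ≤ ·), a ∈ m := fun a ha => hσm ((σ.mem_sort _).mp ha)
  have hsort : σ.sort (· ≤ ·) ≠ [] := List.ne_nil_of_mem ((σ.mem_sort _).mpr ha)
  refine ⟨salPath m (σ.sort (· ≤ ·)), fun h => hsort ?_, salNode_of_mem_salPath hm hsorted hsub,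
    isChain_salPath hm hsorted hsub, map_fst_salPath m _⟩
  rw [← map_fst_salPath m (σ.sort (· ≤ ·)), h, List.map_nil]

theorem stmt13 {V : Type*} [Fintype V] [LinearOrder V] (M : Finset (Finset V))
    (hne : ∀ m ∈ M, m ≠ ∅)
    (hanti : ∀ m ∈ M, ∀ m' ∈ M, m ⊆ m' → m = m') :
    (∀ l : List (V × Option V × Finset V), l ≠ [] →
        (∀ p ∈ l, SALNode M p) → l.Chain' (SALEdge M) →
        (l.map Prod.fst).Pairwise (· < ·) ∧ (l.map Prod.fst).toFinset ∈ genComplex M) ∧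
    (∀ σ : Finset V, σ ∈ genComplex M →
        ∃ l : List (V × Option V × Finset V), l ≠ [] ∧
          (∀ p ∈ l, SALNode M p) ∧ l.Chain' (SALEdge M) ∧
          l.map Prod.fst = σ.sort (· ≤ ·)) :=
  stmt13_general M
end
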